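/- For n ∈ ℕ, n ≥ 1, consider the flower graph F_n consisting of n circles (petals), each of length 1, all attached at a single vertex v, together with one half-line attached at v. Then C_{K_n} → 1 as n → ∞. (Here the compact core K_n, of total length n and uniformly bounded diameter, becomes more and more intricate as n grows.) -/

import Mathlib

open MeasureTheory Real Set Filter

noncomputable section

/-- `f ∈ H¹(0,L)` with weak derivative `f'`. -/
def IsH1Interval (L : ℝ) (f f' : ℝ → ℝ) : Prop :=
  (∀ x ∈ Icc (0:ℝ) L, f x = f 0 + ∫ t in (0:ℝ)..x, f' t) ∧
  IntervalIntegrable f' volume 0 L ∧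
  IntervalIntegrable (fun x => f' x ^ 2) volume 0 L

/-- `h ∈ H¹(0,∞)` with weak derivative `h'`. -/
def IsH1Half (h h' : ℝ → ℝ) : Prop :=
  (∀ x : ℝ, 0 ≤ x → h x = h 0 + ∫ t in (0:ℝ)..x, h' t) ∧
  MemLp h 2 (volume.restrict (Ioi 0)) ∧ MemLp h' 2 (volume.restrict (Ioi 0))

/-- `u = (f₁,…,f_n,h) ∈ H¹(F_n)` on the flower graph `F_n`: `n` petals of
length `1` and one half-line, all attached at a single vertex, with the
continuity conditions `f_i(0) = f_i(1) = h(0)` for every `i`. -/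
def FlowerH1 (n : ℕ) (f f' : Fin n → ℝ → ℝ) (h h' : ℝ → ℝ) : Prop :=
  (∀ i : Fin n, IsH1Interval 1 (f i) (f' i)) ∧ IsH1Half h h' ∧
  (∀ i : Fin n, f i 0 = f i 1 ∧ f i 1 = h 0)

/-- `‖u‖₂²` on `F_n`. -/
def flowerMass (n : ℕ) (f : Fin n → ℝ → ℝ) (h : ℝ → ℝ) : ℝ :=
  (∑ i : Fin n, ∫ x in (0:ℝ)..1, f i x ^ 2) + ∫ x in Ioi (0:ℝ), h x ^ 2

/-- `‖u'‖₂²` on `F_n`. -/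
def flowerKin (n : ℕ) (f' : Fin n → ℝ → ℝ) (h' : ℝ → ℝ) : ℝ :=
  (∑ i : Fin n, ∫ x in (0:ℝ)..1, f' i x ^ 2) + ∫ x in Ioi (0:ℝ), h' x ^ 2

/-- `‖u‖_{6,K_n}⁶` on the compact core (the union of the petals). -/
def flowerSix (n : ℕ) (f : Fin n → ℝ → ℝ) : ℝ :=
  ∑ i : Fin n, ∫ x in (0:ℝ)..1, f i x ^ 6

/-- `u ≢ 0` on `F_n`. -/
def flowerNonzero (n : ℕ) (f : Fin n → ℝ → ℝ) (h : ℝ → ℝ) : Prop :=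
  (∃ i : Fin n, ∃ x ∈ Icc (0:ℝ) 1, f i x ≠ 0) ∨ (∃ x : ℝ, 0 ≤ x ∧ h x ≠ 0)

/-- The sharp reduced Gagliardo–Nirenberg constant `C_{K_n}` on `F_n`. -/
def flowerCK (n : ℕ) : ℝ :=
  sSup {q : ℝ | ∃ (f f' : Fin n → ℝ → ℝ) (h h' : ℝ → ℝ),
    FlowerH1 n f f' h h' ∧ flowerNonzero n f h ∧
    q = flowerSix n f / (flowerMass n f h ^ 2 * flowerKin n f' h')}


/-! On a petal `f` with `f 0 = f 1 = h 0`, the increment `f(x)² - h(0)²` equals `2 ∫₀ˣ f f'` and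
also `-2 ∫ₓ¹ f f'`, so `f²` stays within `Q = ∫ |f f'| ≤ ‖f‖₂ ‖f'‖₂` of `W = h(0)²`. On the
half-line `W ≤ 2 ∫ |h h'| ≤ 2 ‖h‖₂ ‖h'‖₂`, because `h²` cannot stay away from `0`. Hence
`∫ f⁶ ≤ (W + Q)² ∫ f²` on each petal, and every petal carries mass at least `W - Q`, so that
`n W` is at most the mass of the core plus `∑ Q`. Expanding `(W + Q)²`, the terms `θ W² + θ² k`
(with `θ`, `k` the mass and kinetic energy of the core) are at most `‖u‖₂⁴ ‖u'‖₂²` by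
`W² ≤ 4 ‖h‖₂² ‖h'‖₂²`, while the cross term is `O(1/n)` of that, giving `C_{K_n} ≤ 1 + 6/n`.
The function equal to `1` on the core and to `exp(-x/(2n))` on the half-line has quotient `1`.
-/

theorem sq_eq_sq_add_integral_of_eq_add_primitive {f φ : ℝ → ℝ} {x : ℝ} (hx : 0 ≤ x)
    (hrep : ∀ y ∈ Icc 0 x, f y = f 0 + ∫ t in (0:ℝ)..y, φ t)
    (hφ : IntervalIntegrable φ volume 0 x) :
    f x ^ 2 = f 0 ^ 2 + 2 * ∫ t in (0:ℝ)..x, f t * φ t := by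
  set F : ℝ → ℝ := fun y => f 0 + ∫ t in (0:ℝ)..y, φ t
  have hF : AbsolutelyContinuousOnInterval F 0 x :=
    (LipschitzWith.const (f 0)).lipschitzOnWith.absolutelyContinuousOnInterval.add
      (hφ.absolutelyContinuousOnInterval_intervalIntegral left_mem_uIcc)
  have hFTC : ∫ t in (0:ℝ)..x, deriv F t * F t + F t * deriv F t = F x * F x - F 0 * F 0 :=
    hF.integral_deriv_mul_eq_sub hF
  have hintegrand : ∫ t in (0:ℝ)..x, 2 * (f t * φ t)
      = ∫ t in (0:ℝ)..x, deriv F t * F t + F t * deriv F t := by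
    refine intervalIntegral.integral_congr_ae ?_
    filter_upwards [hφ.ae_hasDerivAt_integral] with t ht ht'
    have htx : t ∈ uIcc 0 x := uIoc_subset_uIcc ht'
    rw [((ht htx 0 left_mem_uIcc).const_add (f 0)).deriv,
      hrep t (by rwa [uIcc_of_le hx] at htx)]
    ring
  rw [← intervalIntegral.integral_const_mul, hintegrand, hFTC, hrep x ⟨hx, le_rfl⟩]
  simp only [F, intervalIntegral.integral_same]
  ring

theorem sq_integral_abs_mul_le {α : Type*} [MeasurableSpace α] {μ : Measure α} {f g : α → ℝ}
    (hf : MemLp f 2 μ) (hg : MemLp g 2 μ) :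
    (∫ a, |f a * g a| ∂μ) ^ 2 ≤ (∫ a, f a ^ 2 ∂μ) * ∫ a, g a ^ 2 ∂μ := by
  have h := integral_mul_norm_le_Lp_mul_Lq Real.HolderConjugate.two_two (by simpa using hf)
    (by simpa using hg)
  simp only [Real.norm_eq_abs, ← abs_mul, Real.rpow_two, sq_abs] at h
  rw [← Real.sqrt_eq_rpow, ← Real.sqrt_eq_rpow] at h
  calc (∫ a, |f a * g a| ∂μ) ^ 2 ≤ (√(∫ a, f a ^ 2 ∂μ) * √(∫ a, g a ^ 2 ∂μ)) ^ 2 :=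
        pow_le_pow_left₀ (integral_nonneg fun a => abs_nonneg _) h 2
    _ = (∫ a, f a ^ 2 ∂μ) * ∫ a, g a ^ 2 ∂μ := by
        rw [mul_pow, sq_sqrt (integral_nonneg fun a => sq_nonneg _),
          sq_sqrt (integral_nonneg fun a => sq_nonneg _)]

theorem intervalIntegrable_of_memLp_Ioi {φ : ℝ → ℝ} (hφ : MemLp φ 2 (volume.restrict (Ioi 0)))
    {x : ℝ} (hx : 0 ≤ x) : IntervalIntegrable φ volume 0 x := by
  have hφx := hφ.restrict (Ioc 0 x)
  rw [Measure.restrict_restrict measurableSet_Ioc, inter_eq_left.2 Ioc_subset_Ioi_self] at hφx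
  exact (intervalIntegrable_iff_integrableOn_Ioc_of_le hx).2 (hφx.integrable one_le_two)

section UnitInterval

variable {g : ℝ → ℝ} {w Q : ℝ}

theorem integral_pow_six_le_of_abs_sq_sub_le (hg : ContinuousOn g (Icc 0 1))
    (hosc : ∀ x ∈ Icc (0:ℝ) 1, |g x ^ 2 - w| ≤ Q) :
    ∫ x in (0:ℝ)..1, g x ^ 6 ≤ (w + Q) ^ 2 * ∫ x in (0:ℝ)..1, g x ^ 2 := by
  rw [← intervalIntegral.integral_const_mul]
  refine intervalIntegral.integral_mono_on zero_le_one ?_ ?_ fun x hx => ?_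
  · exact (hg.fun_pow 6).intervalIntegrable_of_Icc (μ := volume) zero_le_one
  · exact (continuousOn_const.mul (hg.fun_pow 2)).intervalIntegrable_of_Icc (μ := volume)
      zero_le_one
  · have hle : g x ^ 2 ≤ w + Q := by linarith [le_abs_self (g x ^ 2 - w), hosc x hx]
    calc g x ^ 6 = (g x ^ 2) ^ 2 * g x ^ 2 := by ring
      _ ≤ (w + Q) ^ 2 * g x ^ 2 := by gcongr

theorem integral_sq_le_of_abs_sq_sub_le (hg : ContinuousOn g (Icc 0 1))
    (hosc : ∀ x ∈ Icc (0:ℝ) 1, |g x ^ 2 - w| ≤ Q) :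
    ∫ x in (0:ℝ)..1, g x ^ 2 ≤ w + Q := by
  have := intervalIntegral.integral_mono_on zero_le_one
    ((hg.fun_pow 2).intervalIntegrable_of_Icc (μ := volume) zero_le_one) intervalIntegrable_const
    fun x hx => (by linarith [le_abs_self (g x ^ 2 - w), hosc x hx] : g x ^ 2 ≤ w + Q)
  simpa using this

theorem le_integral_sq_add_of_abs_sq_sub_le (hg : ContinuousOn g (Icc 0 1))
    (hosc : ∀ x ∈ Icc (0:ℝ) 1, |g x ^ 2 - w| ≤ Q) :
    w ≤ (∫ x in (0:ℝ)..1, g x ^ 2) + Q := by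
  have := intervalIntegral.integral_mono_on zero_le_one intervalIntegrable_const
    ((hg.fun_pow 2).intervalIntegrable_of_Icc (μ := volume) zero_le_one)
    fun x hx => (by linarith [neg_abs_le (g x ^ 2 - w), hosc x hx] : w - Q ≤ g x ^ 2)
  simp only [intervalIntegral.integral_const, sub_zero, one_smul] at this
  linarith

end UnitInterval

namespace IsH1Interval

variable {L : ℝ} {f φ : ℝ → ℝ}

theorem continuousOn (hf : IsH1Interval L f φ) (hL : 0 ≤ L) : ContinuousOn f (Icc 0 L) := by
  have hcont := (hf.2.1.absolutelyContinuousOnInterval_intervalIntegral (c := 0)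
    left_mem_uIcc).continuousOn
  rw [uIcc_of_le hL] at hcont
  exact (continuousOn_const.add hcont).congr hf.1

theorem intervalIntegrable_mul (hf : IsH1Interval L f φ) (hL : 0 ≤ L) :
    IntervalIntegrable (fun t => f t * φ t) volume 0 L :=
  hf.2.1.continuousOn_mul (by rw [uIcc_of_le hL]; exact hf.continuousOn hL)

theorem sq_eq (hf : IsH1Interval L f φ) {x : ℝ} (hx : x ∈ Icc 0 L) :
    f x ^ 2 = f 0 ^ 2 + 2 * ∫ t in (0:ℝ)..x, f t * φ t :=
  sq_eq_sq_add_integral_of_eq_add_primitive hx.1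
    (fun y hy => hf.1 y ⟨hy.1, hy.2.trans hx.2⟩)
    (hf.2.1.mono_set (by
      rw [uIcc_of_le hx.1, uIcc_of_le (hx.1.trans hx.2)]; exact Icc_subset_Icc le_rfl hx.2))

/-- On a loop, `f x ^ 2 - f 0 ^ 2` is both `2 ∫₀ˣ f φ` and `-2 ∫ₓᴸ f φ`. -/
theorem abs_sq_sub_sq_le_of_loop (hf : IsH1Interval L f φ) (hloop : f 0 = f L) {x : ℝ}
    (hx : x ∈ Icc 0 L) :
    |f x ^ 2 - f 0 ^ 2| ≤ ∫ t in (0:ℝ)..L, |f t * φ t| := by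
  have hL : 0 ≤ L := hx.1.trans hx.2
  have hint := hf.intervalIntegrable_mul hL
  have hint₁ : IntervalIntegrable (fun t => f t * φ t) volume 0 x :=
    hint.mono_set (by rw [uIcc_of_le hx.1, uIcc_of_le hL]; exact Icc_subset_Icc le_rfl hx.2)
  have hint₂ : IntervalIntegrable (fun t => f t * φ t) volume x L :=
    hint.mono_set (by rw [uIcc_of_le hx.2, uIcc_of_le hL]; exact Icc_subset_Icc hx.1 le_rfl)
  have htotal : ∫ t in (0:ℝ)..L, f t * φ t = 0 := by
    have := hf.sq_eq ⟨hL, le_rfl⟩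
    rw [← hloop] at this
    linarith
  have hsplit := intervalIntegral.integral_add_adjacent_intervals hint₁ hint₂
  have hsplit_abs := intervalIntegral.integral_add_adjacent_intervals hint₁.abs hint₂.abs
  have h₁ := intervalIntegral.abs_integral_le_integral_abs (μ := volume)
    (f := fun t => f t * φ t) hx.1
  have h₂ := intervalIntegral.abs_integral_le_integral_abs (μ := volume)
    (f := fun t => f t * φ t) hx.2
  rw [hf.sq_eq hx, add_sub_cancel_left, abs_mul, abs_two]
  rw [htotal, ← eq_neg_iff_add_eq_zero] at hsplit
  rw [← abs_neg, ← hsplit] at h₂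
  linarith

theorem sq_integral_abs_mul_le (hf : IsH1Interval L f φ) (hL : 0 ≤ L) :
    (∫ t in (0:ℝ)..L, |f t * φ t|) ^ 2
      ≤ (∫ t in (0:ℝ)..L, f t ^ 2) * ∫ t in (0:ℝ)..L, φ t ^ 2 := by
  have hφ := (intervalIntegrable_iff_integrableOn_Ioc_of_le hL).1 hf.2.1
  have hφ2 := (intervalIntegrable_iff_integrableOn_Ioc_of_le hL).1 hf.2.2
  have hf2 := (intervalIntegrable_iff_integrableOn_Ioc_of_le hL).1
    (((hf.continuousOn hL).fun_pow 2).intervalIntegrable_of_Icc (μ := volume) hL)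
  have hfm := ((hf.continuousOn hL).mono Ioc_subset_Icc_self).aestronglyMeasurable
    (μ := volume) measurableSet_Ioc
  simp only [intervalIntegral.integral_of_le hL]
  exact _root_.sq_integral_abs_mul_le ((memLp_two_iff_integrable_sq hfm).2 hf2)
    ((memLp_two_iff_integrable_sq hφ.aestronglyMeasurable).2 hφ2)

end IsH1Interval

namespace IsH1Half

variable {h h' : ℝ → ℝ}

theorem integrableOn_abs_mul (hh : IsH1Half h h') :
    IntegrableOn (fun x => |h x * h' x|) (Ioi 0) :=
  (hh.2.1.integrable_mul hh.2.2).abs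

/-- Otherwise `h²` would stay above a positive constant on the whole half-line. -/
theorem sq_at_zero_le (hh : IsH1Half h h') :
    h 0 ^ 2 ≤ 2 * ∫ x in Ioi 0, |h x * h' x| := by
  set J := ∫ x in Ioi 0, |h x * h' x|
  have hlower : ∀ x ∈ Ioi (0:ℝ), h 0 ^ 2 - 2 * J ≤ h x ^ 2 := by
    intro x hx_pos
    have hx : (0:ℝ) ≤ x := le_of_lt hx_pos
    have hsq := sq_eq_sq_add_integral_of_eq_add_primitive hx (fun y hy => hh.1 y hy.1)
      (intervalIntegrable_of_memLp_Ioi hh.2.2 hx)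
    have h₁ := intervalIntegral.abs_integral_le_integral_abs (μ := volume)
      (f := fun t => h t * h' t) hx
    have h₂ : ∫ t in (0:ℝ)..x, |h t * h' t| ≤ J := by
      rw [intervalIntegral.integral_of_le hx]
      exact setIntegral_mono_set hh.integrableOn_abs_mul
        (Eventually.of_forall fun t => abs_nonneg _) Ioc_subset_Ioi_self.eventuallyLE
    linarith [neg_abs_le (∫ t in (0:ℝ)..x, h t * h' t)]
  by_contra! hcon
  have hδ : 0 < h 0 ^ 2 - 2 * J := by linarith
  have hfin := hh.2.1.integrable_sq.measure_norm_ge_lt_top hδ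
  refine absurd hfin (not_lt.2 (top_le_iff.2 ?_))
  have hsub : Ioi 0 ⊆ {x | h 0 ^ 2 - 2 * J ≤ ‖h x ^ 2‖} :=
    fun x hx => (hlower x hx).trans (le_norm_self _)
  rw [Measure.restrict_apply' measurableSet_Ioi, inter_eq_right.2 hsub, Real.volume_Ioi]

theorem sq_sq_at_zero_le (hh : IsH1Half h h') :
    (h 0 ^ 2) ^ 2 ≤ 4 * (∫ x in Ioi 0, h x ^ 2) * ∫ x in Ioi 0, h' x ^ 2 := by
  have hCS := sq_integral_abs_mul_le hh.2.1 hh.2.2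
  calc (h 0 ^ 2) ^ 2 ≤ (2 * ∫ x in Ioi 0, |h x * h' x|) ^ 2 :=
        pow_le_pow_left₀ (sq_nonneg _) hh.sq_at_zero_le 2
    _ ≤ 4 * (∫ x in Ioi 0, h x ^ 2) * ∫ x in Ioi 0, h' x ^ 2 := by nlinarith

end IsH1Half

theorem cross_term_le {n θ k W P X : ℝ} (hθ : 0 ≤ θ) (hW : 0 ≤ W) (hP : 0 ≤ P)
    (hX : 0 ≤ X) (hXθ : X ≤ θ * P) (hXW : X ≤ (W + P) * P) (hPθk : P ^ 2 ≤ θ * k)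
    (hnW : n * W ≤ θ + P) :
    n * (2 * W * X) ≤ 6 * (θ ^ 2 * k + θ * W ^ 2) := by
  have hnWX : n * W * X ≤ (θ + P) * X := mul_le_mul_of_nonneg_right hnW hX
  have hθP : θ * P ^ 2 ≤ θ ^ 2 * k := by nlinarith
  rcases le_total θ k with hθk | hkθ
  · have hPk : P ≤ k := by nlinarith
    have h₁ : (θ + P) * X ≤ (θ + P) * (θ * P) := by gcongr
    have h₂ : θ ^ 2 * P ≤ θ ^ 2 * k := by gcongr
    nlinarith
  · have hPθ : P ≤ θ := by nlinarith
    have h₁ : (θ + P) * X ≤ 2 * θ * ((W + P) * P) := by nlinarith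
    have h₂ : 2 * θ * (W * P) ≤ θ * (W ^ 2 + P ^ 2) := by nlinarith [sq_nonneg (W - P)]
    nlinarith

theorem main_term_le {θ k W c b : ℝ} (hθ : 0 ≤ θ) (hk : 0 ≤ k) (hc : 0 ≤ c) (hb : 0 ≤ b)
    (hWcb : W ^ 2 ≤ 4 * c * b) :
    θ ^ 2 * k + θ * W ^ 2 ≤ (θ + c) ^ 2 * (k + b) := by
  nlinarith [mul_nonneg (sq_nonneg (θ - c)) hb, mul_nonneg (mul_nonneg hθ hc) hk,
    mul_nonneg (mul_nonneg hc hc) hk, mul_le_mul_of_nonneg_left hWcb hθ]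

open Finset in
theorem sum_sq_add_mul_le {ι : Type*} [Fintype ι] {A K Q : ι → ℝ} {W c b : ℝ}
    (hA : ∀ i, 0 ≤ A i) (hK : ∀ i, 0 ≤ K i) (hQ : ∀ i, 0 ≤ Q i)
    (hQAK : ∀ i, Q i ^ 2 ≤ A i * K i) (hAW : ∀ i, A i ≤ W + Q i) (hWA : ∀ i, W ≤ A i + Q i)
    (hW : 0 ≤ W) (hc : 0 ≤ c) (hb : 0 ≤ b) (hWcb : W ^ 2 ≤ 4 * c * b) :
    ∑ i, (W + Q i) ^ 2 * A i
      ≤ (1 + 6 / Fintype.card ι) * ((∑ i, A i + c) ^ 2 * (∑ i, K i + b)) := by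
  cases isEmpty_or_nonempty ι
  · simp only [univ_eq_empty, sum_empty]
    positivity
  set θ := ∑ i, A i
  set k := ∑ i, K i
  set P := ∑ i, Q i
  set X := ∑ i, Q i * A i
  set n : ℝ := (Fintype.card ι : ℝ)
  have hθ : 0 ≤ θ := sum_nonneg fun i _ => hA i
  have hk : 0 ≤ k := sum_nonneg fun i _ => hK i
  have hP : 0 ≤ P := sum_nonneg fun i _ => hQ i
  have hX : 0 ≤ X := sum_nonneg fun i _ => mul_nonneg (hQ i) (hA i)
  have hAθ : ∀ i, A i ≤ θ := fun i => single_le_sum (fun j _ => hA j) (mem_univ i)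
  have hQP : ∀ i, Q i ≤ P := fun i => single_le_sum (fun j _ => hQ j) (mem_univ i)
  have hexpand : ∑ i, (W + Q i) ^ 2 * A i ≤ θ * W ^ 2 + 2 * W * X + θ ^ 2 * k := by
    have hterm : ∀ i, (W + Q i) ^ 2 * A i
        ≤ W ^ 2 * A i + 2 * W * (Q i * A i) + θ ^ 2 * K i := by
      intro i
      have : Q i ^ 2 * A i ≤ θ ^ 2 * K i := by
        calc Q i ^ 2 * A i ≤ A i * K i * A i := mul_le_mul_of_nonneg_right (hQAK i) (hA i)
          _ ≤ θ * K i * θ :=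
            mul_le_mul (mul_le_mul_of_nonneg_right (hAθ i) (hK i)) (hAθ i) (hA i)
              (mul_nonneg hθ (hK i))
          _ = θ ^ 2 * K i := by ring
      linarith
    calc ∑ i, (W + Q i) ^ 2 * A i
        ≤ ∑ i, (W ^ 2 * A i + 2 * W * (Q i * A i) + θ ^ 2 * K i) :=
          sum_le_sum fun i _ => hterm i
      _ = θ * W ^ 2 + 2 * W * X + θ ^ 2 * k := by
          rw [sum_add_distrib, sum_add_distrib, ← mul_sum, ← mul_sum, ← mul_sum]; ring
  have hXθ : X ≤ θ * P := by
    rw [mul_sum]; exact sum_le_sum fun i _ => by nlinarith [hAθ i, hQ i]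
  have hXW : X ≤ (W + P) * P := by
    rw [mul_sum]; exact sum_le_sum fun i _ => by nlinarith [hAW i, hQP i, hQ i]
  have hPθk : P ^ 2 ≤ θ * k := sum_sq_le_sum_mul_sum_of_sq_le_mul _ (fun i _ => hA i)
    (fun i _ => hK i) fun i _ => hQAK i
  have hnW : n * W ≤ θ + P := by
    have := sum_le_sum fun i (_ : i ∈ (univ : Finset ι)) => hWA i
    rwa [sum_const, card_univ, nsmul_eq_mul, sum_add_distrib] at this
  have hcross := cross_term_le hθ hW hP hX hXθ hXW hPθk hnW
  have hn : 0 < n := Nat.cast_pos.2 Fintype.card_pos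
  have hcross' : 2 * W * X ≤ 6 / n * (θ ^ 2 * k + θ * W ^ 2) := by
    rw [div_mul_eq_mul_div, le_div_iff₀ hn]; linarith
  have hM : 0 ≤ θ ^ 2 * k + θ * W ^ 2 := by positivity
  calc ∑ i, (W + Q i) ^ 2 * A i ≤ (1 + 6 / n) * (θ ^ 2 * k + θ * W ^ 2) := by linarith
    _ ≤ (1 + 6 / n) * ((θ + c) ^ 2 * (k + b)) := by gcongr; exact main_term_le hθ hk hc hb hWcb

theorem flowerSix_le {n : ℕ} {f f' : Fin n → ℝ → ℝ} {h h' : ℝ → ℝ}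
    (H : FlowerH1 n f f' h h') :
    flowerSix n f ≤ (1 + 6 / n) * (flowerMass n f h ^ 2 * flowerKin n f' h') := by
  obtain ⟨hpetal, hhalf, hbc⟩ := H
  have hcont : ∀ i, ContinuousOn (f i) (Icc 0 1) := fun i => (hpetal i).continuousOn zero_le_one
  have hosc : ∀ i, ∀ x ∈ Icc (0:ℝ) 1,
      |f i x ^ 2 - h 0 ^ 2| ≤ ∫ t in (0:ℝ)..1, |f i t * f' i t| := by
    intro i x hx
    rw [← (hbc i).2, ← (hbc i).1]
    exact (hpetal i).abs_sq_sub_sq_le_of_loop (hbc i).1 hx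
  have hsq_nonneg : ∀ g : ℝ → ℝ, 0 ≤ ∫ x in (0:ℝ)..1, g x ^ 2 :=
    fun g => intervalIntegral.integral_nonneg zero_le_one fun x _ => sq_nonneg _
  have hsum := sum_sq_add_mul_le (fun i => hsq_nonneg (f i)) (fun i => hsq_nonneg (f' i))
    (fun i => intervalIntegral.integral_nonneg zero_le_one fun x _ => abs_nonneg _)
    (fun i => (hpetal i).sq_integral_abs_mul_le zero_le_one)
    (fun i => integral_sq_le_of_abs_sq_sub_le (hcont i) (hosc i))
    (fun i => le_integral_sq_add_of_abs_sq_sub_le (hcont i) (hosc i)) (sq_nonneg (h 0))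
    (integral_nonneg fun x => sq_nonneg (h x)) (integral_nonneg fun x => sq_nonneg (h' x))
    hhalf.sq_sq_at_zero_le
  rw [Fintype.card_fin] at hsum
  exact (Finset.sum_le_sum fun i _ =>
    integral_pow_six_le_of_abs_sq_sub_le (hcont i) (hosc i)).trans hsum

theorem flowerCK_ratio_le {n : ℕ} {f f' : Fin n → ℝ → ℝ} {h h' : ℝ → ℝ}
    (H : FlowerH1 n f f' h h') :
    flowerSix n f / (flowerMass n f h ^ 2 * flowerKin n f' h') ≤ 1 + 6 / n := by
  have hkin : 0 ≤ flowerKin n f' h' :=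
    add_nonneg (Finset.sum_nonneg fun i _ =>
      intervalIntegral.integral_nonneg zero_le_one fun x _ => sq_nonneg _)
      (integral_nonneg fun x => sq_nonneg _)
  exact div_le_of_le_mul₀ (by positivity) (by positivity) (flowerSix_le H)

theorem flowerCK_le (n : ℕ) : flowerCK n ≤ 1 + 6 / n :=
  Real.sSup_le (by rintro q ⟨f, f', h, h', H, -, rfl⟩; exact flowerCK_ratio_le H) (by positivity)

section ExpDecay

variable {a : ℝ}

theorem exp_neg_mul_sq (a x : ℝ) : exp (-a * x) ^ 2 = exp (-(2 * a) * x) := by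
  rw [sq, ← Real.exp_add]; ring_nf

theorem integrableOn_exp_neg_mul_sq (ha : 0 < a) :
    IntegrableOn (fun x => exp (-a * x) ^ 2) (Ioi 0) := by
  simp only [exp_neg_mul_sq]
  exact integrableOn_exp_mul_Ioi (by linarith) 0

theorem integral_exp_neg_mul_sq (ha : 0 < a) :
    ∫ x in Ioi (0:ℝ), exp (-a * x) ^ 2 = 1 / (2 * a) := by
  simp only [exp_neg_mul_sq]
  rw [integral_exp_mul_Ioi (by linarith) 0, mul_zero, exp_zero, neg_div_neg_eq]

theorem isH1Half_exp_neg_mul (ha : 0 < a) :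
    IsH1Half (fun x => exp (-a * x)) (fun x => -a * exp (-a * x)) := by
  have hderiv : ∀ x, HasDerivAt (fun x => exp (-a * x)) (-a * exp (-a * x)) x := fun x => by
    simpa [mul_comm] using ((hasDerivAt_id x).const_mul (-a)).exp
  have hcont : Continuous fun x => exp (-a * x) := by fun_prop
  have hcont' : Continuous fun x => -a * exp (-a * x) := by fun_prop
  refine ⟨fun x _ => ?_, ?_, ?_⟩
  · rw [intervalIntegral.integral_eq_sub_of_hasDerivAt (fun t _ => hderiv t)
      (hcont'.intervalIntegrable 0 x)]
    ring
  · exact (memLp_two_iff_integrable_sq hcont.aestronglyMeasurable).2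
      (integrableOn_exp_neg_mul_sq ha)
  · refine (memLp_two_iff_integrable_sq hcont'.aestronglyMeasurable).2 ?_
    simpa only [mul_pow, neg_sq] using (integrableOn_exp_neg_mul_sq ha).const_mul (a ^ 2)

end ExpDecay

/-- Among the tails `exp (-a x)` behind the constant `1` on the core, the quotient is
`4 n m / (n + m)²` with `m = 1 / (2a)` the mass of the tail: it is maximal, equal to `1`,
at `m = n`. -/
theorem exists_flowerCK_ratio_eq_one {n : ℕ} (hn : n ≠ 0) :
    ∃ (f f' : Fin n → ℝ → ℝ) (h h' : ℝ → ℝ), FlowerH1 n f f' h h' ∧ flowerNonzero n f h ∧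
      1 = flowerSix n f / (flowerMass n f h ^ 2 * flowerKin n f' h') := by
  set a : ℝ := 1 / (2 * n)
  have hn' : (0:ℝ) < n := Nat.cast_pos.2 (Nat.pos_of_ne_zero hn)
  have ha : 0 < a := by positivity
  refine ⟨fun _ _ => 1, fun _ _ => 0, fun x => exp (-a * x), fun x => -a * exp (-a * x),
    ⟨fun i => ⟨fun x _ => by simp, intervalIntegrable_const, by simp⟩,
      isH1Half_exp_neg_mul ha, fun i => ⟨rfl, by simp⟩⟩,
    Or.inr ⟨0, le_rfl, by simp⟩, ?_⟩
  have hna : 2 * n * a = 1 := by simp only [a]; field_simp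
  have htail : 1 / (2 * a) = n := by rw [div_eq_iff (by positivity)]; linarith
  have hsix : flowerSix n (fun _ _ => 1) = n := by simp [flowerSix]
  have hmass : flowerMass n (fun _ _ => 1) (fun x => exp (-a * x)) = 2 * n := by
    rw [flowerMass, integral_exp_neg_mul_sq ha, htail]
    simp [two_mul]
  have hkin : flowerKin n (fun _ _ => 0) (fun x => -a * exp (-a * x)) = a ^ 2 * n := by
    simp only [flowerKin, mul_pow, neg_sq]
    rw [integral_const_mul, integral_exp_neg_mul_sq ha, htail]
    simp
  rw [hsix, hmass, hkin, eq_div_iff (by positivity)]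
  linear_combination n * (2 * n * a + 1) * hna

theorem one_le_flowerCK {n : ℕ} (hn : n ≠ 0) : 1 ≤ flowerCK n := by
  obtain ⟨f, f', h, h', H, hnz, hone⟩ := exists_flowerCK_ratio_eq_one hn
  refine le_csSup ⟨1 + 6 / n, ?_⟩ ⟨f, f', h, h', H, hnz, hone⟩
  rintro q ⟨f, f', h, h', H, -, rfl⟩
  exact flowerCK_ratio_le H

/-- As the number of petals grows (i.e. the compact core becomes more and more
intricate, with total length `n` and bounded diameter), the sharp reduced
Gagliardo–Nirenberg constant of the flower graph converges to `1`. -/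
theorem flower_CK_tendsto_one :
    Tendsto (fun n : ℕ => flowerCK n) atTop (nhds 1) := by
  have hbound : Tendsto (fun n : ℕ => 1 + 6 / (n : ℝ)) atTop (nhds 1) := by
    simpa using (tendsto_const_div_atTop_nhds_zero_nat (6:ℝ)).const_add 1
  refine tendsto_of_tendsto_of_tendsto_of_le_of_le' tendsto_const_nhds hbound ?_
    (Eventually.of_forall flowerCK_le)
  filter_upwards [eventually_ne_atTop 0] with n hn using one_le_flowerCK hn
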